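/- arXiv:math/0503640 — 2 statements merged into one kernel-verified Lean document; each statement's English description precedes it below -/
import Mathlib

section
/- The matrices G₁ and G₃ (the figure eight knot holonomy generators) are parabolic elements of SU(2,1): each has all eigenvalues of modulus 1, is not diagonalizable, and fixes exactly one point on the boundary of complex hyperbolic space. The matrix G₂ is elliptic (diagonalizable with unit-modulus eigenvalues). -/
open Complex Matrix

noncomputable section

/-- `ω = (1 - i√3)/2`. -/
def ω : ℂ := (1 - Complex.I * Real.sqrt 3) / 2

/-- The Hermitian form `⟨u,w⟩ = u₁·conj(w₃) + u₂·conj(w₂) + u₃·conj(w₁)` on `ℂ³`. -/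
def herm (z w : Fin 3 → ℂ) : ℂ :=
  z 0 * (starRingEnd ℂ) (w 2) + z 1 * (starRingEnd ℂ) (w 1) + z 2 * (starRingEnd ℂ) (w 0)

def G₁ : Matrix (Fin 3) (Fin 3) ℂ :=
  !![1, ω, -ω; 0, 1, -(starRingEnd ℂ) ω; 0, 0, 1]

def G₂ : Matrix (Fin 3) (Fin 3) ℂ :=
  !![1, 1, -ω; -1, 0, -(starRingEnd ℂ) ω; -(starRingEnd ℂ) ω, ω, 1]

def G₃ : Matrix (Fin 3) (Fin 3) ℂ :=
  !![1, 1, -ω; -ω, (starRingEnd ℂ) ω, -1 - (starRingEnd ℂ) ω; -(starRingEnd ℂ) ω, 0, 1 + ω]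

/-- All eigenvalues of `M` have modulus one. -/
def UnitEigenvalues (M : Matrix (Fin 3) (Fin 3) ℂ) : Prop :=
  ∀ μ : ℂ, M.charpoly.IsRoot μ → ‖μ‖ = 1

/-- `M` is diagonalizable over `ℂ`. -/
def Diagonalizable (M : Matrix (Fin 3) (Fin 3) ℂ) : Prop :=
  ∃ (P : Matrix (Fin 3) (Fin 3) ℂ) (d : Fin 3 → ℂ),
    IsUnit P.det ∧ M = P * Matrix.diagonal d * P⁻¹

/-- `M` fixes exactly one point of the boundary of complex hyperbolic space,
i.e. exactly one null line of `ℂ³` is invariant under `M`. -/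
def UniqueBoundaryFixedPoint (M : Matrix (Fin 3) (Fin 3) ℂ) : Prop :=
  ∃ v : Fin 3 → ℂ, v ≠ 0 ∧ herm v v = 0 ∧ (∃ μ : ℂ, M.mulVec v = μ • v) ∧
    ∀ w : Fin 3 → ℂ, w ≠ 0 → herm w w = 0 → (∃ μ : ℂ, M.mulVec w = μ • w) →
      ∃ c : ℂ, w = c • v

/-!
`ω` is a primitive sixth root of unity: `ω² = ω - 1` and `conj ω = 1 - ω`, so all the matrix
identities involved are ring identities modulo `ω² - ω + 1`.

`G₁` and `G₃` are unipotent, `(G - 1)³ = 0`, without being the identity. Hence `1` is their only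
eigenvalue, and they are not diagonalizable, because a diagonalizable unipotent matrix is the
identity. Their fixed vectors form a single line, spanned by a null vector (`(1, 0, 0)` for `G₁`,
`(-1, ω - 1, ω)` for `G₃`); as every eigenvector is fixed, this is the only invariant null line.
`G₂` is conjugate to `diag(1, ω, conj ω)`, so it is diagonalizable and `G₂⁶ = 1`, which puts its
eigenvalues on the unit circle.
-/

open Polynomial

namespace Matrix

variable {n K : Type*} [Fintype n] [DecidableEq n] [Field K] {M : Matrix n n K}

theorem isRoot_charpoly_of_mulVec_eq_smul {w : n → K} {μ : K} (hw : w ≠ 0)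
    (h : M *ᵥ w = μ • w) : M.charpoly.IsRoot μ := by
  rw [IsRoot, eval_charpoly, ← exists_mulVec_eq_zero_iff]
  exact ⟨w, hw, by simp [sub_mulVec, h]⟩

theorem isRoot_of_aeval_eq_zero_of_isRoot_charpoly {p : K[X]} (hp : aeval M p = 0) {μ : K}
    (hμ : M.charpoly.IsRoot μ) : p.IsRoot μ := by
  rw [← charpoly_toLin', ← Module.End.hasEigenvalue_iff_isRoot_charpoly] at hμ
  have hmin : (minpoly K M).IsRoot μ := minpoly_toLin' M ▸ Module.End.isRoot_of_hasEigenvalue hμ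
  obtain ⟨q, rfl⟩ := minpoly.dvd K M hp
  simp [hmin.eq_zero]

theorem eq_one_of_isRoot_charpoly (hM : IsNilpotent (M - 1)) {μ : K}
    (hμ : M.charpoly.IsRoot μ) : μ = 1 := by
  obtain ⟨k, hk⟩ := hM
  have := isRoot_of_aeval_eq_zero_of_isRoot_charpoly (p := (X - 1) ^ k) (by simpa using hk) hμ
  exact sub_eq_zero.mp (IsNilpotent.eq_zero ⟨k, by simpa using this⟩)

theorem pow_eq_one_of_mul_eq_mul_diagonal {P : Matrix n n K} {d : n → K} (hP : IsUnit P.det)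
    (h : M * P = P * diagonal d) {k : ℕ} (hd : ∀ i, d i ^ k = 1) : M ^ k = 1 := by
  have hsemi : SemiconjBy P (diagonal d ^ k) (M ^ k) := SemiconjBy.pow_right h.symm k
  have hD : diagonal d ^ k = 1 := by
    rw [diagonal_pow, ← diagonal_one]; exact congrArg diagonal (funext hd)
  rw [hD, SemiconjBy, mul_one] at hsemi
  exact ((isUnit_iff_isUnit_det P).mpr hP).mul_eq_right.mp hsemi.symm

theorem eq_one_of_mul_eq_mul_diagonal {P : Matrix n n K} {d : n → K} (hM : IsNilpotent (M - 1))
    (hP : IsUnit P.det) (h : M * P = P * diagonal d) : M = 1 := by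
  obtain ⟨k, hk⟩ := hM
  have hPunit : IsUnit P := (isUnit_iff_isUnit_det P).mpr hP
  have hsemi : SemiconjBy P (diagonal d - 1) (M - 1) := by
    rw [SemiconjBy, mul_sub, sub_mul, h, mul_one, one_mul]
  have hdk : (diagonal d - 1) ^ k = 0 := by
    rw [← hPunit.mul_right_eq_zero, hsemi.pow_right k, hk, zero_mul]
  have hd : diagonal d = 1 := by
    rw [← diagonal_one]
    refine congrArg diagonal (funext fun i => sub_eq_zero.mp (IsNilpotent.eq_zero ⟨k, ?_⟩))
    simpa [← diagonal_one, diagonal_sub, diagonal_pow] using congrFun (congrFun hdk i) i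
  rw [hd, mul_one] at h
  exact hPunit.mul_eq_right.mp h

end Matrix

section

variable {M : Matrix (Fin 3) (Fin 3) ℂ}

theorem diagonalizable_iff_exists_mul_eq_mul_diagonal :
    Diagonalizable M ↔
      ∃ (P : Matrix (Fin 3) (Fin 3) ℂ) (d : Fin 3 → ℂ), IsUnit P.det ∧ M * P = P * diagonal d := by
  refine exists₂_congr fun P d => and_congr_right fun hP => ⟨fun h => ?_, fun h => ?_⟩
  · rw [h, Matrix.mul_assoc, nonsing_inv_mul P hP, Matrix.mul_one]
  · rw [← h, Matrix.mul_assoc, mul_nonsing_inv P hP, Matrix.mul_one]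

theorem not_diagonalizable_of_isNilpotent_sub_one (hM : IsNilpotent (M - 1)) (hne : M ≠ 1) :
    ¬ Diagonalizable M := by
  rw [diagonalizable_iff_exists_mul_eq_mul_diagonal]
  rintro ⟨P, d, hP, h⟩
  exact hne (eq_one_of_mul_eq_mul_diagonal hM hP h)

theorem unitEigenvalues_of_isNilpotent_sub_one (hM : IsNilpotent (M - 1)) :
    UnitEigenvalues M := fun _ hμ => by
  rw [eq_one_of_isRoot_charpoly hM hμ, norm_one]

theorem unitEigenvalues_of_pow_eq_one {k : ℕ} (hM : M ^ k = 1) (hk : k ≠ 0) :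
    UnitEigenvalues M := fun μ hμ => by
  have := isRoot_of_aeval_eq_zero_of_isRoot_charpoly (p := X ^ k - 1) (by simp [hM]) hμ
  exact norm_eq_one_of_pow_eq_one (by simpa [sub_eq_zero] using this) hk

theorem uniqueBoundaryFixedPoint_of_isNilpotent_sub_one (hM : IsNilpotent (M - 1))
    {v : Fin 3 → ℂ} (hv : v ≠ 0) (hnull : herm v v = 0)
    (hfix : ∀ w, M *ᵥ w = w ↔ ∃ c : ℂ, w = c • v) : UniqueBoundaryFixedPoint M := by
  refine ⟨v, hv, hnull, ⟨1, by rw [one_smul, hfix]; exact ⟨1, (one_smul ℂ v).symm⟩⟩, ?_⟩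
  rintro w hw - ⟨μ, hμ⟩
  obtain rfl := eq_one_of_isRoot_charpoly hM (isRoot_charpoly_of_mulVec_eq_smul hw hμ)
  exact (hfix w).mp (by rw [hμ, one_smul])

end

theorem ω_mul_self : ω * ω = ω - 1 := by
  have h3 : (Real.sqrt 3 : ℂ) ^ 2 = 3 := by
    rw [← Complex.ofReal_pow, Real.sq_sqrt (by norm_num : (0:ℝ) ≤ 3)]; norm_num
  simp only [ω]
  linear_combination ((Real.sqrt 3 : ℂ) ^ 2 / 4) * I_sq - h3 / 4

theorem conj_ω : (starRingEnd ℂ) ω = 1 - ω := by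
  simp only [ω, map_div₀, map_sub, map_ofNat, map_one, map_mul, conj_I, conj_ofReal]
  ring

theorem ω_ne_zero : ω ≠ 0 := fun h => by simpa [h] using ω_mul_self

theorem isNilpotent_G₁_sub_one : IsNilpotent (G₁ - 1) := ⟨3, by
  rw [G₁, conj_ω, pow_three]
  ext i j; fin_cases i <;> fin_cases j <;> simp [Matrix.mul_apply, Fin.sum_univ_three]⟩

theorem isNilpotent_G₃_sub_one : IsNilpotent (G₃ - 1) := ⟨3, by
  rw [G₃, conj_ω, pow_three]
  ext i j; fin_cases i <;> fin_cases j <;> simp [Matrix.mul_apply, Fin.sum_univ_three] <;>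
    grind [ω_mul_self]⟩

theorem G₁_ne_one : G₁ ≠ 1 := fun h => ω_ne_zero (by simpa [G₁] using congrFun (congrFun h 0) 1)

theorem G₃_ne_one : G₃ ≠ 1 := fun h => by simpa [G₃] using congrFun (congrFun h 0) 1

theorem G₁_mulVec_eq_self_iff (w : Fin 3 → ℂ) : G₁ *ᵥ w = w ↔ ∃ c : ℂ, w = c • ![1, 0, 0] := by
  refine ⟨fun h => ?_, ?_⟩
  · have h0 : w 0 + ω * w 1 + -(ω * w 2) = w 0 := by
      simpa [G₁, mulVec, dotProduct, Fin.sum_univ_three] using congrFun h 0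
    have h1 : w 1 + (ω - 1) * w 2 = w 1 := by
      simpa [G₁, conj_ω, mulVec, dotProduct, Fin.sum_univ_three] using congrFun h 1
    have hw2 : w 2 = 0 := by grind [ω_mul_self, ω_ne_zero]
    have hw1 : w 1 = 0 := by grind [ω_ne_zero]
    exact ⟨w 0, by ext i; fin_cases i <;> simp [hw1, hw2]⟩
  · rintro ⟨c, rfl⟩
    ext i; fin_cases i <;> simp [G₁, mulVec, dotProduct, Fin.sum_univ_three]

theorem G₃_mulVec_eq_self_iff (w : Fin 3 → ℂ) :
    G₃ *ᵥ w = w ↔ ∃ c : ℂ, w = c • ![-1, ω - 1, ω] := by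
  refine ⟨fun h => ?_, ?_⟩
  · have h0 : w 0 + w 1 + -(ω * w 2) = w 0 := by
      simpa [G₃, mulVec, dotProduct, Fin.sum_univ_three] using congrFun h 0
    have h2 : (ω - 1) * w 0 + (1 + ω) * w 2 = w 2 := by
      simpa [G₃, conj_ω, mulVec, dotProduct, Fin.sum_univ_three] using congrFun h 2
    have hw1 : w 1 = ω * w 2 := by linear_combination h0
    have hw0 : w 0 = (ω - 1) * w 2 := by grind [ω_mul_self]
    refine ⟨(1 - ω) * w 2, ?_⟩
    ext i; fin_cases i <;> simp [hw0, hw1] <;> grind [ω_mul_self]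
  · rintro ⟨c, rfl⟩
    ext i; fin_cases i <;> simp [G₃, conj_ω, mulVec, dotProduct, Fin.sum_univ_three] <;>
      grind [ω_mul_self]

-- The columns of `P₂` are eigenvectors of `G₂` for the eigenvalues `d₂ = (1, ω, conj ω)`.
def P₂ : Matrix (Fin 3) (Fin 3) ℂ := !![-1, 0, ω - 2; ω, 1 + ω, 1 + ω; 1, 2 - ω, 0]

def d₂ : Fin 3 → ℂ := ![1, ω, 1 - ω]

theorem det_P₂ : P₂.det = 3 := by
  simp only [P₂, det_fin_three, of_apply, cons_val', cons_val_zero, cons_val_one, cons_val,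
    cons_val_fin_one]
  grind [ω_mul_self]

theorem G₂_mul_P₂ : G₂ * P₂ = P₂ * diagonal d₂ := by
  rw [G₂, conj_ω]
  ext i j; fin_cases i <;> fin_cases j <;> simp [P₂, d₂, Matrix.mul_apply, Fin.sum_univ_three] <;>
    grind [ω_mul_self]

theorem d₂_pow_six (i : Fin 3) : d₂ i ^ 6 = 1 := by
  fin_cases i <;> simp [d₂] <;> grind [ω_mul_self]

theorem uniqueBoundaryFixedPoint_G₁ : UniqueBoundaryFixedPoint G₁ :=
  uniqueBoundaryFixedPoint_of_isNilpotent_sub_one isNilpotent_G₁_sub_one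
    (fun h => by simpa using congrFun h 0) (by simp [herm]) G₁_mulVec_eq_self_iff

theorem uniqueBoundaryFixedPoint_G₃ : UniqueBoundaryFixedPoint G₃ :=
  uniqueBoundaryFixedPoint_of_isNilpotent_sub_one isNilpotent_G₃_sub_one
    (fun h => by simpa using congrFun h 0) (by
      simp only [herm, cons_val_zero, cons_val_one, cons_val, conj_ω, map_sub, map_one, map_neg]
      grind [ω_mul_self])
    G₃_mulVec_eq_self_iff

theorem isUnit_det_P₂ : IsUnit P₂.det := by
  rw [det_P₂]; norm_num

/-- `G₁` and `G₃` are parabolic: all eigenvalues of modulus one, not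
diagonalizable, and a unique fixed point on the boundary.  `G₂` is elliptic:
diagonalizable with unit-modulus eigenvalues. -/
theorem figure_eight_generators_types :
    (UnitEigenvalues G₁ ∧ ¬ Diagonalizable G₁ ∧ UniqueBoundaryFixedPoint G₁) ∧
    (UnitEigenvalues G₃ ∧ ¬ Diagonalizable G₃ ∧ UniqueBoundaryFixedPoint G₃) ∧
    (UnitEigenvalues G₂ ∧ Diagonalizable G₂) := by
  have hG₂ : G₂ ^ 6 = 1 := pow_eq_one_of_mul_eq_mul_diagonal isUnit_det_P₂ G₂_mul_P₂ d₂_pow_six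
  refine ⟨⟨?_, ?_, uniqueBoundaryFixedPoint_G₁⟩, ⟨?_, ?_, uniqueBoundaryFixedPoint_G₃⟩, ?_, ?_⟩
  · exact unitEigenvalues_of_isNilpotent_sub_one isNilpotent_G₁_sub_one
  · exact not_diagonalizable_of_isNilpotent_sub_one isNilpotent_G₁_sub_one G₁_ne_one
  · exact unitEigenvalues_of_isNilpotent_sub_one isNilpotent_G₃_sub_one
  · exact not_diagonalizable_of_isNilpotent_sub_one isNilpotent_G₃_sub_one G₃_ne_one
  · exact unitEigenvalues_of_pow_eq_one hG₂ (by norm_num)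
  · exact diagonalizable_iff_exists_mul_eq_mul_diagonal.mpr ⟨P₂, d₂, isUnit_det_P₂, G₂_mul_P₂⟩

end
end

section
/- The matrices H₁ = [[1,0,0],[-2conj(ω),1,0],[-2ω-1,2ω,1]] and H₂ = [[1,0,0],[conj(ω),1,0],[-ω,-ω,1]] with ω = (1-i√3)/2 commute, are both parabolic (unipotent lower-triangular), and generate a free abelian group of rank 2 in SU(2,1). -/
/-!
Both matrices lie in the image of the homomorphism `(t, s) ↦ exp (t N + s E₂₀)` from `(ℂ², +)`
to `SL(3, ℂ)`, where `N = conj ω E₁₀ - ω E₂₁` and `E₂₀` is central in the lower unitriangular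
group: `H₁` and `H₂` are the images of `(-2, 1 - 2ω)` and `(1, (1 - 2ω)/2)`. This homomorphism is
injective and `1 - 2ω = -i√3 ≠ 0` makes the two vectors `ℤ`-independent, which gives
commutativity and freeness at once. A lower unitriangular matrix with entries `x, y, z` preserves
`J` as soon as `y = -conj x` and `2 Re z + |x|² = 0`, and for `H₁`, `H₂` these reduce to
`ω + conj ω = ω conj ω = 1`.
-/

open Complex Matrix

noncomputable section

def formJ : Matrix (Fin 3) (Fin 3) ℂ := !![0, 0, 1; 0, 1, 0; 1, 0, 0]

def InSU21 (M : Matrix (Fin 3) (Fin 3) ℂ) : Prop :=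
  M.conjTranspose * formJ * M = formJ ∧ M.det = 1

def H₁ : Matrix (Fin 3) (Fin 3) ℂ :=
  !![1, 0, 0; -2 * (starRingEnd ℂ) ω, 1, 0; -2 * ω - 1, 2 * ω, 1]

def H₂ : Matrix (Fin 3) (Fin 3) ℂ :=
  !![1, 0, 0; (starRingEnd ℂ) ω, 1, 0; -ω, -ω, 1]

open ComplexConjugate

lemma ω_add_conj : ω + conj ω = 1 := by
  rw [add_conj]
  simp [ω]

lemma ω_mul_conj : ω * conj ω = 1 := by
  rw [mul_conj, ← ofReal_one]
  congr 1
  norm_num [normSq_apply, ω]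

lemma conj_ω_ne_zero : conj ω ≠ 0 := by
  intro h
  simpa [h] using ω_mul_conj

lemma one_sub_two_mul_ω_ne_zero : 1 - 2 * ω ≠ 0 := by
  simp [ω, Complex.ext_iff]

section LowerUnitri

variable {K : Type*} [Field K]

def lowerUnitri (x y z : K) : Matrix (Fin 3) (Fin 3) K := !![1, 0, 0; x, 1, 0; z, y, 1]

lemma lowerUnitri_mul (x y z x' y' z' : K) :
    lowerUnitri x y z * lowerUnitri x' y' z' =
      lowerUnitri (x + x') (y + y') (z + z' + y * x') := by
  ext i j
  fin_cases i <;> fin_cases j <;> simp [lowerUnitri, mul_apply, Fin.sum_univ_succ]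
  ring

lemma lowerUnitri_zero : lowerUnitri (0 : K) 0 0 = 1 := by
  rw [one_fin_three]
  rfl

lemma lowerUnitri_eq_one_iff {x y z : K} : lowerUnitri x y z = 1 ↔ x = 0 ∧ y = 0 ∧ z = 0 := by
  refine ⟨fun h => ?_, by rintro ⟨rfl, rfl, rfl⟩; exact lowerUnitri_zero⟩
  rw [← lowerUnitri_zero] at h
  exact ⟨congrFun (congrFun h 1) 0, congrFun (congrFun h 2) 1, congrFun (congrFun h 2) 0⟩

lemma lowerUnitri_sub_one_pow_three (x y z : K) : (lowerUnitri x y z - 1) ^ 3 = 0 := by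
  ext i j
  fin_cases i <;> fin_cases j <;>
    simp [lowerUnitri, pow_succ, mul_apply, Fin.sum_univ_succ, one_apply]

variable [CharZero K]

/-- `(t, s) ↦ exp (t (a E₁₀ + b E₂₁) + s E₂₀)`; the term `t² a b / 2` is the quadratic term of
the exponential. -/
def unipotentHom (a b : K) : Multiplicative (K × K) →* Matrix (Fin 3) (Fin 3) K where
  toFun p := lowerUnitri (p.toAdd.1 * a) (p.toAdd.1 * b) (p.toAdd.2 + p.toAdd.1 ^ 2 * (a * b) / 2)
  map_one' := by simp [lowerUnitri_zero]
  map_mul' p q := by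
    rw [lowerUnitri_mul]
    congr 1 <;> simp <;> ring

lemma unipotentHom_injective {a b : K} (ha : a ≠ 0) : Function.Injective (unipotentHom a b) := by
  refine (injective_iff_map_eq_one _).2 fun p hp => ?_
  obtain ⟨h₁, -, h₂⟩ := lowerUnitri_eq_one_iff.1 hp
  have ht : p.toAdd.1 = 0 := (mul_eq_zero.1 h₁).resolve_right ha
  exact toAdd_eq_zero.1 (Prod.ext ht (by simpa [ht] using h₂))

lemma eq_zero_of_zsmul_add_zsmul_eq_zero {δ : K} (hδ : δ ≠ 0) {m n : ℤ}
    (h : m • ((-2 : K), δ) + n • ((1 : K), δ / 2) = 0) : m = 0 ∧ n = 0 := by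
  simp only [Prod.ext_iff, Prod.fst_add, Prod.snd_add, Prod.smul_mk, zsmul_eq_mul, Prod.fst_zero,
    Prod.snd_zero] at h
  obtain ⟨h₁, h₂⟩ := h
  have hn : (n : K) = 2 * m := by linear_combination h₁
  have hm : (m : K) = 0 := by
    have : (2 * m : K) * δ = 0 := by linear_combination h₂ - δ / 2 * hn
    simpa [hδ] using this
  exact ⟨by exact_mod_cast hm, by exact_mod_cast (hn.trans (by simp [hm]) : (n : K) = 0)⟩

end LowerUnitri

lemma inSU21_lowerUnitri {x y z : ℂ} (hy : y = -conj x) (hz : z + conj z + conj x * x = 0) :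
    InSU21 (lowerUnitri x y z) := by
  constructor
  · ext i j
    fin_cases i <;> fin_cases j <;> simp [lowerUnitri, formJ, mul_apply, Fin.sum_univ_succ, hy]
    linear_combination hz
  · simp [lowerUnitri, det_fin_three]

lemma inSU21_H₁ : InSU21 H₁ :=
  inSU21_lowerUnitri (by simp [map_ofNat])
    (by simp [map_ofNat]; linear_combination -2 * ω_add_conj + 4 * ω_mul_conj)

lemma inSU21_H₂ : InSU21 H₂ :=
  inSU21_lowerUnitri (by simp) (by simp; linear_combination -ω_add_conj + ω_mul_conj)

lemma H₁_eq_unipotentHom : H₁ = unipotentHom (conj ω) (-ω) (.ofAdd (-2, 1 - 2 * ω)) := by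
  show lowerUnitri _ _ _ = lowerUnitri _ _ _
  congr 1 <;> simp
  linear_combination 2 * ω_mul_conj

lemma H₂_eq_unipotentHom : H₂ = unipotentHom (conj ω) (-ω) (.ofAdd (1, (1 - 2 * ω) / 2)) := by
  show lowerUnitri _ _ _ = lowerUnitri _ _ _
  congr 1 <;> simp
  linear_combination ω_mul_conj / 2

/-- `H₁` and `H₂` lie in `SU(2,1)`, commute, are parabolic (unipotent and not the
identity), and generate a free abelian group of rank 2. -/
theorem torus_holonomy_free_abelian :
    InSU21 H₁ ∧ InSU21 H₂ ∧
    H₁ * H₂ = H₂ * H₁ ∧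
    ((H₁ - 1) ^ 3 = 0 ∧ H₁ ≠ 1) ∧
    ((H₂ - 1) ^ 3 = 0 ∧ H₂ ≠ 1) ∧
    (∀ u₁ u₂ : GL (Fin 3) ℂ, (u₁ : Matrix (Fin 3) (Fin 3) ℂ) = H₁ →
      (u₂ : Matrix (Fin 3) (Fin 3) ℂ) = H₂ →
      ∀ m n : ℤ, u₁ ^ m * u₂ ^ n = 1 → m = 0 ∧ n = 0) := by
  set f := unipotentHom (conj ω) (-ω)
  have hf : Function.Injective f := unipotentHom_injective conj_ω_ne_zero
  have hF : Function.Injective f.toHomUnits := fun _ _ h => hf (congrArg Units.val h)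
  refine ⟨inSU21_H₁, inSU21_H₂, ?_, ⟨lowerUnitri_sub_one_pow_three _ _ _, ?_⟩,
    ⟨lowerUnitri_sub_one_pow_three _ _ _, ?_⟩, ?_⟩
  · rw [H₁_eq_unipotentHom, H₂_eq_unipotentHom, ← map_mul, mul_comm, map_mul]
  · rw [H₁_eq_unipotentHom, ← map_one f, hf.ne_iff]
    simp
  · rw [H₂_eq_unipotentHom, ← map_one f, hf.ne_iff]
    simp
  intro u₁ u₂ h₁ h₂ m n h
  obtain rfl : u₁ = f.toHomUnits (.ofAdd (-2, 1 - 2 * ω)) := Units.ext (h₁.trans H₁_eq_unipotentHom)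
  obtain rfl : u₂ = f.toHomUnits (.ofAdd (1, (1 - 2 * ω) / 2)) :=
    Units.ext (h₂.trans H₂_eq_unipotentHom)
  have hofAdd (v w : ℂ × ℂ) :
      (Multiplicative.ofAdd v) ^ m * (.ofAdd w) ^ n = .ofAdd (m • v + n • w) := rfl
  rw [← map_zpow f.toHomUnits, ← map_zpow f.toHomUnits, ← map_mul, hofAdd,
    ← map_one f.toHomUnits, hF.eq_iff, ofAdd_eq_one] at h
  exact eq_zero_of_zsmul_add_zsmul_eq_zero one_sub_two_mul_ω_ne_zero h

end
end
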